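/- arXiv:2507.17715 — 8 statements merged into one kernel-verified Lean document; each statement's English description precedes it below -/
import Mathlib

section
/- Let A be an ortholattice and let E and E' be quantifiers on A such that E(E' a) = E'(E a) for all a ∈ A. Define relations R and R' on the set F(A) of proper filters of A by: x R y iff {E a : a ∈ x} ⊆ y, and x R' y iff {E' a : a ∈ x} ⊆ y. Then R and R' commute: for all x, z ∈ F(A), there exists y ∈ F(A) with x R y and y R' z if and only if there exists w ∈ F(A) with x R' w and w R z. -/
/-- An orthocomplementation on a bounded lattice. -/
def IsOrtho {A : Type*} [Lattice A] [BoundedOrder A] (perp : A → A) : Prop :=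
  (∀ a : A, a ⊓ perp a = ⊥) ∧ (∀ a : A, a ⊔ perp a = ⊤) ∧
  (∀ a b : A, a ≤ b → perp b ≤ perp a) ∧ (∀ a : A, perp (perp a) = a)

/-- A quantifier on an ortholattice. -/
def IsQuantifier {A : Type*} [Lattice A] [BoundedOrder A] (perp E : A → A) : Prop :=
  (∀ a b : A, E (a ⊔ b) = E a ⊔ E b) ∧ E ⊥ = ⊥ ∧ (∀ a : A, E (E a) = E a) ∧
  (∀ a : A, a ≤ E a) ∧ (∀ a : A, E (perp (E a)) = perp (E a))

/-- A proper filter: nonempty, upward closed, closed under meets, not containing ⊥. -/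
def IsPF {A : Type*} [Lattice A] [BoundedOrder A] (x : Set A) : Prop :=
  x.Nonempty ∧ (∀ a ∈ x, ∀ b : A, a ≤ b → b ∈ x) ∧
  (∀ a ∈ x, ∀ b ∈ x, a ⊓ b ∈ x) ∧ (⊥ : A) ∉ x

/-- The set of proper filters of `A`. -/
abbrev PF (A : Type*) [Lattice A] [BoundedOrder A] : Type _ := {x : Set A // IsPF x}

/-- `phi a` is the set of proper filters containing `a`. -/
def phi {A : Type*} [Lattice A] [BoundedOrder A] (a : A) : Set (PF A) := {x | a ∈ x.1}

/-- Orthogonal of a set of proper filters: `x ⊥ y` iff some `a ∈ x` has `perp a ∈ y`. -/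
def oPerp {A : Type*} [Lattice A] [BoundedOrder A] (perp : A → A) (U : Set (PF A)) :
    Set (PF A) := {x | ∀ y ∈ U, ∃ a ∈ x.1, perp a ∈ y.1}

/-!
If `E (E' a) = E' (E a)`, then from `x R y R' z` one gets `x R' w R z` with `w` the filter
generated by `E' '' x`: for `E' a ≤ c` with `a ∈ x` we have `E' (E a) ∈ z` because `E a ∈ y`,
hence `E c ≥ E (E' a) = E' (E a)` lies in `z`. The converse is the same argument with the
roles of `E` and `E'` exchanged.
-/

section

variable {A : Type*} [Lattice A] [BoundedOrder A]

namespace IsQuantifier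

variable {perp E : A → A}

theorem monotone (hE : IsQuantifier perp E) : Monotone E := fun a b hab => by
  rw [← sup_eq_right.mpr hab, hE.1]
  exact le_sup_left

theorem le_apply (hE : IsQuantifier perp E) (a : A) : a ≤ E a := hE.2.2.2.1 a

end IsQuantifier

namespace PF

def image (f : A → A) (hf : Monotone f) (hle : ∀ a, a ≤ f a) (x : PF A) : PF A where
  val := {c | ∃ a ∈ x.1, f a ≤ c}
  property := by
    obtain ⟨x, ⟨a, ha⟩, hup, hinf, hbot⟩ := x
    refine ⟨⟨f a, a, ha, le_rfl⟩, ?_, ?_, ?_⟩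
    · rintro c ⟨a, ha, hac⟩ d hcd
      exact ⟨a, ha, hac.trans hcd⟩
    · rintro c ⟨a, ha, hac⟩ d ⟨b, hb, hbd⟩
      exact ⟨a ⊓ b, hinf a ha b hb,
        le_inf ((hf inf_le_left).trans hac) ((hf inf_le_right).trans hbd)⟩
    · rintro ⟨a, ha, hab⟩
      exact hbot (le_bot_iff.mp ((hle a).trans hab) ▸ ha)

variable {f : A → A} {hf : Monotone f} {hle : ∀ a, a ≤ f a}

theorem image_subset_image (x : PF A) : f '' x.1 ⊆ (image f hf hle x).1 := by
  rintro _ ⟨a, ha, rfl⟩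
  exact ⟨a, ha, le_rfl⟩

theorem image_image_subset {g : A → A} (hg : Monotone g) {x z : PF A}
    (h : (g ∘ f) '' x.1 ⊆ z.1) : g '' (image f hf hle x).1 ⊆ z.1 := by
  rintro _ ⟨c, ⟨a, ha, hac⟩, rfl⟩
  exact z.2.2.1 _ (h ⟨a, ha, rfl⟩) _ (hg hac)

end PF

theorem exists_comp_swap_of_comm {E E' : A → A} (hE : Monotone E) (hE' : Monotone E')
    (hle : ∀ a, a ≤ E' a) (hcomm : ∀ a : A, E (E' a) = E' (E a)) {x z : PF A}
    (h : ∃ y : PF A, E '' x.1 ⊆ y.1 ∧ E' '' y.1 ⊆ z.1) :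
    ∃ w : PF A, E' '' x.1 ⊆ w.1 ∧ E '' w.1 ⊆ z.1 := by
  obtain ⟨y, hxy, hyz⟩ := h
  refine ⟨PF.image E' hE' hle x, PF.image_subset_image x, PF.image_image_subset hE ?_⟩
  rintro _ ⟨a, ha, rfl⟩
  rw [Function.comp_apply, hcomm]
  exact hyz ⟨E a, hxy ⟨a, ha, rfl⟩, rfl⟩

end

theorem stmt0_general {A : Type*} [Lattice A] [BoundedOrder A] (perp : A → A)
    (E E' : A → A)
    (hE : IsQuantifier perp E) (hE' : IsQuantifier perp E')
    (hcomm : ∀ a : A, E (E' a) = E' (E a)) (x z : PF A) :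
    (∃ y : PF A, E '' x.1 ⊆ y.1 ∧ E' '' y.1 ⊆ z.1) ↔
      (∃ w : PF A, E' '' x.1 ⊆ w.1 ∧ E '' w.1 ⊆ z.1) :=
  ⟨exists_comp_swap_of_comm hE.monotone hE'.monotone hE'.le_apply hcomm,
    exists_comp_swap_of_comm hE'.monotone hE.monotone hE.le_apply fun a => (hcomm a).symm⟩

theorem stmt0 {A : Type*} [Lattice A] [BoundedOrder A] (perp : A → A)
    (hA : IsOrtho perp) (E E' : A → A)
    (hE : IsQuantifier perp E) (hE' : IsQuantifier perp E')
    (hcomm : ∀ a : A, E (E' a) = E' (E a)) (x z : PF A) :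
    (∃ y : PF A, E '' x.1 ⊆ y.1 ∧ E' '' y.1 ⊆ z.1) ↔
      (∃ w : PF A, E' '' x.1 ⊆ w.1 ∧ E '' w.1 ⊆ z.1) :=
  stmt0_general perp E E' hE hE' hcomm x z
end

section
/- Let A be an I-dimensional cylindric ortholattice and let i, k, l ∈ I with k ≠ i and k ≠ l. Define the relation R_k on F(A) by x R_k y iff {∃_k a : a ∈ x} ⊆ y, and for W ⊆ F(A) let R_k[W] = {y ∈ F(A) : x R_k y for some x ∈ W}. Then R_k[φ(δ_{i,k}) ∩ φ(δ_{k,l})] = φ(δ_{i,l}). -/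
/-! The image under `R_k` of `φ d` is `φ (∃_k d)` for every `d`: a filter containing `∃_k d` is
reached from the principal filter of `d`, which is proper because `∃_k ⊥ = ⊥`. Taking
`d = δ_{i,k} ⊓ δ_{k,l}` and using `∃_k d = δ_{i,l}` gives the theorem. -/

section ProperFilters

variable {A : Type*} [Lattice A] [BoundedOrder A]

theorem IsQuantifier.monotone_s1 {perp E : A → A} (hE : IsQuantifier perp E) : Monotone E := by
  intro a b hab
  calc E a ≤ E a ⊔ E b := le_sup_left
    _ = E b := by rw [← hE.1, sup_eq_right.2 hab]

theorem isPF_Ici {d : A} (hd : d ≠ ⊥) : IsPF (Set.Ici d) :=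
  ⟨⟨d, le_rfl⟩, fun _ ha _ hab => le_trans ha hab, fun _ ha _ hb => le_inf ha hb,
    fun h => hd (le_bot_iff.1 h)⟩

theorem phi_inter_phi (a b : A) : phi a ∩ phi b = phi (a ⊓ b) := by
  ext x
  exact ⟨fun ⟨ha, hb⟩ => x.2.2.2.1 _ ha _ hb,
    fun h => ⟨x.2.2.1 _ h _ inf_le_left, x.2.2.1 _ h _ inf_le_right⟩⟩

theorem image_phi_eq_phi {E : A → A} (hmono : Monotone E) (hbot : E ⊥ = ⊥) (d : A) :
    {y : PF A | ∃ x ∈ phi d, E '' x.1 ⊆ y.1} = phi (E d) := by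
  ext y
  constructor
  · rintro ⟨x, hdx, himage⟩
    exact himage ⟨d, hdx, rfl⟩
  · intro hEd
    have hd : d ≠ ⊥ := by
      rintro rfl
      exact y.2.2.2.2 (hbot ▸ hEd)
    refine ⟨⟨Set.Ici d, isPF_Ici hd⟩, le_refl d, ?_⟩
    rintro _ ⟨a, hda, rfl⟩
    exact y.2.2.1 _ hEd _ (hmono hda)

end ProperFilters

theorem stmt1_general {A : Type*} [Lattice A] [BoundedOrder A] {I : Type*} (perp : A → A)
    (ex : I → A → A) (hq : ∀ i, IsQuantifier perp (ex i))
    (δ : I → I → A)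
    (hδ : ∀ i k l, k ≠ i → k ≠ l → ex k (δ i k ⊓ δ k l) = δ i l)
    (i k l : I) (hki : k ≠ i) (hkl : k ≠ l) :
    {y : PF A | ∃ x ∈ phi (δ i k) ∩ phi (δ k l), ex k '' x.1 ⊆ y.1} = phi (δ i l) := by
  rw [phi_inter_phi, image_phi_eq_phi (hq k).monotone_s1 (hq k).2.1, hδ i k l hki hkl]

theorem stmt1 {A : Type*} [Lattice A] [BoundedOrder A] {I : Type*} (perp : A → A)
    (hA : IsOrtho perp) (ex : I → A → A) (hq : ∀ i, IsQuantifier perp (ex i))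
    (hcomm : ∀ i k (a : A), ex i (ex k a) = ex k (ex i a))
    (δ : I → I → A) (hδsym : ∀ i k, δ i k = δ k i) (hδrefl : ∀ i, δ i i = ⊤)
    (hδ : ∀ i k l, k ≠ i → k ≠ l → ex k (δ i k ⊓ δ k l) = δ i l)
    (i k l : I) (hki : k ≠ i) (hkl : k ≠ l) :
    {y : PF A | ∃ x ∈ phi (δ i k) ∩ phi (δ k l), ex k '' x.1 ⊆ y.1} = phi (δ i l) :=
  stmt1_general perp ex hq δ hδ i k l hki hkl
end

section
/- Let A be an ortholattice and a ∈ A. Then φ(a) = φ(a)^⊥⊥, i.e., the set of proper filters containing a is biorthogonally closed with respect to the orthogonality relation on proper filters. -/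
namespace IsOrtho

variable {A : Type*} [Lattice A] [BoundedOrder A] {perp : A → A}

theorem perp_perp (h : IsOrtho perp) (a : A) : perp (perp a) = a := h.2.2.2 a

theorem perp_le_perp_iff (h : IsOrtho perp) {a b : A} : perp a ≤ perp b ↔ b ≤ a :=
  ⟨fun hab => by simpa only [h.perp_perp] using h.2.2.1 _ _ hab, h.2.2.1 _ _⟩

theorem perp_bot (h : IsOrtho perp) : perp ⊥ = (⊤ : A) := by
  simpa only [bot_sup_eq] using h.2.1 ⊥

theorem perp_eq_bot_iff (h : IsOrtho perp) {a : A} : perp a = ⊥ ↔ a = ⊤ := by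
  constructor
  · intro ha
    rw [← h.perp_perp a, ha, h.perp_bot]
  · rintro rfl
    rw [← h.perp_bot, h.perp_perp]

end IsOrtho

namespace IsPF

variable {A : Type*} [Lattice A] [BoundedOrder A] {x : Set A}

theorem mem_of_le (hx : IsPF x) {a b : A} (ha : a ∈ x) (hab : a ≤ b) : b ∈ x :=
  hx.2.1 a ha b hab

theorem top_mem (hx : IsPF x) : (⊤ : A) ∈ x :=
  let ⟨_, ha⟩ := hx.1
  hx.mem_of_le ha le_top

end IsPF

theorem isPF_Ici_s3 {A : Type*} [Lattice A] [BoundedOrder A] {b : A} (hb : b ≠ ⊥) :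
    IsPF (Set.Ici b) :=
  ⟨Set.nonempty_Ici, fun _ hc _ hcd => le_trans hc hcd, fun _ hc _ hd => le_inf hc hd,
    fun h => hb (le_bot_iff.mp h)⟩

theorem subset_oPerp_oPerp {A : Type*} [Lattice A] [BoundedOrder A] {perp : A → A}
    (hperp : Function.Involutive perp) (U : Set (PF A)) :
    U ⊆ oPerp perp (oPerp perp U) := by
  intro x hx y hy
  obtain ⟨b, hby, hbx⟩ := hy x hx
  exact ⟨perp b, hbx, by rwa [hperp b]⟩

/-- The principal filter generated by `perp a` lies in `(phi a)ᗮ`, so `x` contains some `c`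
with `perp a ≤ perp c`, i.e. `c ≤ a`. -/
theorem oPerp_oPerp_phi_subset {A : Type*} [Lattice A] [BoundedOrder A] {perp : A → A}
    (h : IsOrtho perp) (a : A) : oPerp perp (oPerp perp (phi a)) ⊆ phi a := by
  intro x hx
  by_cases ha : perp a = ⊥
  · show a ∈ x.1
    rw [h.perp_eq_bot_iff.mp ha]
    exact x.2.top_mem
  let y : PF A := ⟨Set.Ici (perp a), isPF_Ici_s3 ha⟩
  have hy : y ∈ oPerp perp (phi a) := fun _ _ => ⟨perp a, le_rfl, by rwa [h.perp_perp]⟩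
  obtain ⟨c, hcx, hcy⟩ := hx y hy
  exact x.2.mem_of_le hcx (h.perp_le_perp_iff.mp hcy)

theorem stmt3 {A : Type*} [Lattice A] [BoundedOrder A] (perp : A → A)
    (hA : IsOrtho perp) (a : A) :
    phi a = oPerp perp (oPerp perp (phi a)) :=
  (subset_oPerp_oPerp hA.perp_perp (phi a)).antisymm (oPerp_oPerp_phi_subset hA a)
end

section
/- Let A be an ortholattice. For each x ∈ F(A) let K_x = {y ∈ F(A) : x ⊆ y}. Then every biorthogonally closed subset U ⊆ F(A) satisfies: (i) U = (⋃_{x∈U} K_x)^⊥⊥, and (ii) U = ⋂ { (⋃_{b∈T} φ(b))^⊥⊥ : T ⊆ A and U ⊆ (⋃_{b∈T} φ(b))^⊥⊥ }. (This is the density of the embedding φ of A into the lattice of biorthogonally closed subsets of F(A): every element is both a join of meets and a meet of joins of elements in the image of φ.) -/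
section Polars

variable {A : Type*} [Lattice A] [BoundedOrder A] (perp : A → A)

def PFOrth (x y : PF A) : Prop := ∃ a ∈ x.1, perp a ∈ y.1

theorem oPerp_eq_lowerPolar (U : Set (PF A)) : oPerp perp U = lowerPolar (PFOrth perp) U := rfl

theorem PFOrth.symm (hpp : Function.Involutive perp) {x y : PF A} :
    PFOrth perp x y → PFOrth perp y x :=
  fun ⟨a, hax, hay⟩ => ⟨perp a, hay, (hpp a).symm ▸ hax⟩

theorem upperPolar_pfOrth (hpp : Function.Involutive perp) (U : Set (PF A)) :
    upperPolar (PFOrth perp) U = oPerp perp U := by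
  ext x
  exact ⟨fun h y hy => PFOrth.symm perp hpp (h hy), fun h y hy => PFOrth.symm perp hpp (h y hy)⟩

theorem oPerp_oPerp_oPerp (hpp : Function.Involutive perp) (U : Set (PF A)) :
    oPerp perp (oPerp perp (oPerp perp U)) = oPerp perp U := by
  rw [← upperPolar_pfOrth perp hpp (oPerp perp U)]
  exact lowerPolar_upperPolar_lowerPolar _ U

theorem isUpperSet_oPerp (U : Set (PF A)) : IsUpperSet (oPerp perp U) :=
  fun _ _ hxy hx z hz => let ⟨a, ha, hpa⟩ := hx z hz; ⟨a, hxy ha, hpa⟩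

theorem iUnion_phi_image_eq_oPerp_singleton (hpp : Function.Involutive perp) (z : PF A) :
    ⋃ b ∈ perp '' z.1, phi b = oPerp perp {z} := by
  ext w
  simp only [Set.mem_iUnion, Set.mem_image, exists_prop, oPerp_eq_lowerPolar,
    mem_lowerPolar_singleton]
  constructor
  · rintro ⟨_, ⟨a, ha, rfl⟩, hw⟩
    exact PFOrth.symm perp hpp ⟨a, ha, hw⟩
  · intro hwz
    obtain ⟨a, ha, hw⟩ := PFOrth.symm perp hpp hwz
    exact ⟨perp a, ⟨a, ha, rfl⟩, hw⟩

end Polars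

theorem stmt6 {A : Type*} [Lattice A] [BoundedOrder A] (perp : A → A)
    (hA : IsOrtho perp) (U : Set (PF A)) (hU : U = oPerp perp (oPerp perp U)) :
    U = oPerp perp (oPerp perp (⋃ x ∈ U, {y : PF A | x.1 ⊆ y.1})) ∧
    U = ⋂₀ {V : Set (PF A) | ∃ T : Set A,
          V = oPerp perp (oPerp perp (⋃ b ∈ T, phi b)) ∧ U ⊆ V} := by
  have hpp : Function.Involutive perp := hA.2.2.2
  constructor
  · have hup : IsUpperSet U := hU ▸ isUpperSet_oPerp perp _
    have hK : ⋃ x ∈ U, {y : PF A | x.1 ⊆ y.1} = U :=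
      (coe_upperClosure U).symm.trans hup.upperClosure
    rwa [hK]
  · refine subset_antisymm (Set.subset_sInter ?_) fun x hx => ?_
    · rintro V ⟨-, -, hUV⟩
      exact hUV
    rw [hU]
    intro z hz
    have hz_mem : oPerp perp {z} ∈ {V : Set (PF A) | ∃ T : Set A,
        V = oPerp perp (oPerp perp (⋃ b ∈ T, phi b)) ∧ U ⊆ V} :=
      ⟨perp '' z.1, by rw [iUnion_phi_image_eq_oPerp_singleton perp hpp,
        oPerp_oPerp_oPerp perp hpp], fun w hw =>
        (mem_lowerPolar_singleton _).2 (PFOrth.symm perp hpp (hz w hw))⟩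
    exact hx _ hz_mem z rfl
end

section
/- Every monadic UVO-space X is a spectral space: X is compact, every open subset of X is a union of compact open subsets, the intersection of any two compact open subsets of X is compact, and every nonempty irreducible closed subset of X is the closure of a (unique) point. -/
/-- The orthogonal of a subset with respect to an orthogonality relation. -/
def tPerp {X : Type*} (orth : X → X → Prop) (U : Set X) : Set X := {x | ∀ y ∈ U, orth x y}

/-- Compact open biorthogonally closed subsets of a topological space with orthogonality. -/
def COB {X : Type*} [TopologicalSpace X] (orth : X → X → Prop) : Set (Set X) :=
  {U | IsCompact U ∧ IsOpen U ∧ U = tPerp orth (tPerp orth U)}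

/-- Relational image of a set. -/
def Rimg {X : Type*} (R : X → X → Prop) (U : Set X) : Set X := {y | ∃ x ∈ U, R x y}

/-!
Compact open biorthogonally closed sets form a basis of compact opens closed under intersection,
so `X` is prespectral and quasi-separated; `X = ∅^⊥` is one of them, so `X` is compact.
For sobriety, the basic opens meeting an irreducible closed set `C` form a proper filter of
`COB X`, hence are exactly the basic neighbourhoods of some point `x`, and `x` is a generic
point of `C`.
-/

open TopologicalSpace Topology

section Basis

variable {X : Type*} [TopologicalSpace X] {B : Set (Set X)}

lemma quasiSeparatedSpace_of_isTopologicalBasis (hB : IsTopologicalBasis B)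
    (hinter : ∀ U ∈ B, ∀ V ∈ B, IsCompact (U ∩ V)) : QuasiSeparatedSpace X :=
  .of_isTopologicalBasis (b := ((↑) : B → Set X)) (by rwa [Subtype.range_coe])
    fun U V ↦ hinter U U.2 V V.2

lemma isGenericPoint_of_forall_mem_basis_iff (hB : IsTopologicalBasis B) {C : Set X}
    (hC : IsClosed C) {x : X} (hx : ∀ U ∈ B, x ∈ U ↔ (U ∩ C).Nonempty) :
    IsGenericPoint x C := by
  have hxC : x ∈ C := by
    rw [← hC.closure_eq, hB.mem_closure_iff]
    exact fun U hU ↦ (hx U hU).1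
  refine (closure_minimal (Set.singleton_subset_iff.2 hxC) hC).antisymm fun y hyC ↦ ?_
  rw [hB.mem_closure_iff]
  exact fun U hU hyU ↦ ⟨x, (hx U hU).2 ⟨y, hyU, hyC⟩, rfl⟩

lemma quasiSober_of_isTopologicalBasis (hB : IsTopologicalBasis B)
    (hinter : ∀ U ∈ B, ∀ V ∈ B, U ∩ V ∈ B)
    (hfilt : ∀ F : Set (Set X), F ⊆ B → F.Nonempty →
      (∀ U ∈ F, ∀ V ∈ F, U ∩ V ∈ F) →
      (∀ U ∈ F, ∀ V ∈ B, U ⊆ V → V ∈ F) → ∅ ∉ F →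
      ∃ x : X, F = {U ∈ B | x ∈ U}) :
    QuasiSober X where
  sober {C} hCirr hC := by
    set F := {U ∈ B | (U ∩ C).Nonempty}
    have hFne : F.Nonempty := by
      obtain ⟨c, hc⟩ := hCirr.nonempty
      obtain ⟨U, hU, hcU, -⟩ := hB.exists_subset_of_mem_open (Set.mem_univ c) isOpen_univ
      exact ⟨U, hU, c, hcU, hc⟩
    have hFinter : ∀ U ∈ F, ∀ V ∈ F, U ∩ V ∈ F := by
      rintro U ⟨hU, hUC⟩ V ⟨hV, hVC⟩
      obtain ⟨y, hyC, hyUV⟩ := hCirr.2 U V (hB.isOpen hU) (hB.isOpen hV)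
        (Set.inter_comm U C ▸ hUC) (Set.inter_comm V C ▸ hVC)
      exact ⟨hinter U hU V hV, y, hyUV, hyC⟩
    have hFup : ∀ U ∈ F, ∀ V ∈ B, U ⊆ V → V ∈ F :=
      fun U ⟨_, hUC⟩ V hV hUV ↦ ⟨hV, hUC.mono (Set.inter_subset_inter_left C hUV)⟩
    have hFproper : ∅ ∉ F := fun ⟨_, hC⟩ ↦ by simp at hC
    obtain ⟨x, hxF⟩ := hfilt F (fun _ hU ↦ hU.1) hFne hFinter hFup hFproper
    refine ⟨x, isGenericPoint_of_forall_mem_basis_iff hB hC fun U hU ↦ ?_⟩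
    have hUF : U ∈ F ↔ U ∈ {U ∈ B | x ∈ U} := by rw [hxF]
    simpa [F, hU] using hUF.symm

end Basis

section COB

variable {X : Type*} {orth : X → X → Prop}

lemma tPerp_empty : tPerp orth (∅ : Set X) = Set.univ := by
  simp [tPerp]

lemma tPerp_univ (hirr : ∀ x, ¬ orth x x) : tPerp orth (Set.univ : Set X) = ∅ :=
  Set.eq_empty_of_forall_notMem fun x hx ↦ hirr x (hx x trivial)

variable [TopologicalSpace X]

lemma empty_mem_COB (hirr : ∀ x, ¬ orth x x) : (∅ : Set X) ∈ COB orth :=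
  ⟨isCompact_empty, isOpen_empty, by rw [tPerp_empty, tPerp_univ hirr]⟩

lemma univ_mem_COB (hirr : ∀ x, ¬ orth x x) (hperp : ∀ U ∈ COB orth, tPerp orth U ∈ COB orth) :
    (Set.univ : Set X) ∈ COB orth :=
  tPerp_empty (orth := orth) ▸ hperp ∅ (empty_mem_COB hirr)

lemma spectralSpace_of_COB [T0Space X] (hirr : ∀ x, ¬ orth x x)
    (hbasis : IsTopologicalBasis (COB orth))
    (hinter : ∀ U ∈ COB orth, ∀ V ∈ COB orth, U ∩ V ∈ COB orth)
    (hperp : ∀ U ∈ COB orth, tPerp orth U ∈ COB orth)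
    (hfilt : ∀ F : Set (Set X), F ⊆ COB orth → F.Nonempty →
      (∀ U ∈ F, ∀ V ∈ F, U ∩ V ∈ F) →
      (∀ U ∈ F, ∀ V ∈ COB orth, U ⊆ V → V ∈ F) → ∅ ∉ F →
      ∃ x : X, F = {U ∈ COB orth | x ∈ U}) :
    SpectralSpace X where
  isCompact_univ := (univ_mem_COB hirr hperp).1
  toQuasiSober := quasiSober_of_isTopologicalBasis hbasis hinter hfilt
  toQuasiSeparatedSpace :=
    quasiSeparatedSpace_of_isTopologicalBasis hbasis fun U hU V hV ↦ (hinter U hU V hV).1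
  toPrespectralSpace := .of_isTopologicalBasis hbasis fun _ hU ↦ hU.1

end COB

theorem stmt9_general {X : Type*} [TopologicalSpace X] [T0Space X]
    (orth : X → X → Prop)
    (hirr : ∀ x, ¬ orth x x)
    (hbasis : TopologicalSpace.IsTopologicalBasis (COB orth))
    (hinter : ∀ U ∈ COB orth, ∀ V ∈ COB orth, U ∩ V ∈ COB orth)
    (hperp : ∀ U ∈ COB orth, tPerp orth U ∈ COB orth)
    (hfilt : ∀ F : Set (Set X), F ⊆ COB orth → F.Nonempty →
      (∀ U ∈ F, ∀ V ∈ F, U ∩ V ∈ F) →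
      (∀ U ∈ F, ∀ V ∈ COB orth, U ⊆ V → V ∈ F) → ∅ ∉ F →
      ∃ x : X, F = {U ∈ COB orth | x ∈ U}) :
    CompactSpace X ∧
    (∀ U : Set X, IsOpen U →
      ∃ S : Set (Set X), (∀ V ∈ S, IsCompact V ∧ IsOpen V) ∧ U = ⋃₀ S) ∧
    (∀ U V : Set X, IsCompact U → IsOpen U → IsCompact V → IsOpen V → IsCompact (U ∩ V)) ∧
    (∀ C : Set X, IsIrreducible C → IsClosed C → ∃! x : X, C = closure {x}) := by
  have := spectralSpace_of_COB hirr hbasis hinter hperp hfilt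
  refine ⟨inferInstance, fun U hU ↦ ?_, fun U V hUc hUo hVc hVo ↦ hUc.inter_of_isOpen hVc hUo hVo,
    fun C hCirr hC ↦ ?_⟩
  · obtain ⟨S, hS, rfl⟩ := PrespectralSpace.isTopologicalBasis.open_eq_sUnion hU
    exact ⟨S, fun V hV ↦ (hS hV).symm, rfl⟩
  · obtain ⟨x, hx⟩ := QuasiSober.sober hCirr hC
    exact ⟨x, hx.symm, fun y hy ↦ (IsGenericPoint.eq hy.symm hx)⟩

theorem stmt9 {X : Type*} [TopologicalSpace X] [T0Space X]
    (orth : X → X → Prop) (R : X → X → Prop)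
    (hirr : ∀ x, ¬ orth x x) (hsym : ∀ x y, orth x y → orth y x)
    (hrefl : ∀ x, R x x) (htrans : ∀ x y z, R x y → R y z → R x z)
    (h1 : ∀ x : X, Rimg R (tPerp orth (Rimg R {x})) ⊆ tPerp orth (Rimg R {x}))
    (hbasis : TopologicalSpace.IsTopologicalBasis (COB orth))
    (hinter : ∀ U ∈ COB orth, ∀ V ∈ COB orth, U ∩ V ∈ COB orth)
    (hperp : ∀ U ∈ COB orth, tPerp orth U ∈ COB orth)
    (hfilt : ∀ F : Set (Set X), F ⊆ COB orth → F.Nonempty →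
      (∀ U ∈ F, ∀ V ∈ F, U ∩ V ∈ F) →
      (∀ U ∈ F, ∀ V ∈ COB orth, U ⊆ V → V ∈ F) → ∅ ∉ F →
      ∃ x : X, F = {U ∈ COB orth | x ∈ U})
    (hsep : ∀ x y, orth x y → ∃ U ∈ COB orth, x ∈ U ∧ y ∈ tPerp orth U)
    (hRimg : ∀ U ∈ COB orth, Rimg R U ∈ COB orth)
    (h6 : ∀ x y, ¬ R x y →
      ∃ V ∈ COB orth, x ∈ V ∧ y ∉ tPerp orth (tPerp orth (Rimg R V))) :
    CompactSpace X ∧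
    (∀ U : Set X, IsOpen U →
      ∃ S : Set (Set X), (∀ V ∈ S, IsCompact V ∧ IsOpen V) ∧ U = ⋃₀ S) ∧
    (∀ U V : Set X, IsCompact U → IsOpen U → IsCompact V → IsOpen V → IsCompact (U ∩ V)) ∧
    (∀ C : Set X, IsIrreducible C → IsClosed C → ∃! x : X, C = closure {x}) :=
  stmt9_general orth hirr hbasis hinter hperp hfilt
end

section
/- Let X and X' be UVO-spaces and let f : X → X' be a map such that: (1) f is continuous and f⁻¹[U] is compact open in X for every compact open U ⊆ X'; (2) if ¬(x ⊥ y) then ¬(f(x) ⊥ f(y)); (3) if ¬(z ⊥ f(y)) then there exists x ∈ X with ¬(x ⊥ y) and z ⩽ f(x), where ⩽ is the specialization order of X' (z ⩽ w iff every open set containing z contains w). Then f⁻¹[U] ∈ COB(X) for every U ∈ COB(X'). -/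
/-- A UVO-space structure on a T0 space (T0 assumed separately as an instance):
orthogonality is irreflexive and symmetric, `COB` is a basis closed under intersections
and orthocomplements, every proper filter of `COB` is realized by a point, and
orthogonal points are separated by a `COB` set. -/
def IsUVO {X : Type*} [TopologicalSpace X] (orth : X → X → Prop) : Prop :=
  (∀ x, ¬ orth x x) ∧ (∀ x y, orth x y → orth y x) ∧
  TopologicalSpace.IsTopologicalBasis (COB orth) ∧
  (∀ U ∈ COB orth, ∀ V ∈ COB orth, U ∩ V ∈ COB orth) ∧
  (∀ U ∈ COB orth, tPerp orth U ∈ COB orth) ∧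
  (∀ F : Set (Set X), F ⊆ COB orth → F.Nonempty →
    (∀ U ∈ F, ∀ V ∈ F, U ∩ V ∈ F) →
    (∀ U ∈ F, ∀ V ∈ COB orth, U ⊆ V → V ∈ F) → ∅ ∉ F →
    ∃ x : X, F = {U ∈ COB orth | x ∈ U}) ∧
  (∀ x y, orth x y → ∃ U ∈ COB orth, x ∈ U ∧ y ∈ tPerp orth U)

theorem IsUVO.symm {X : Type*} [TopologicalSpace X] {orth : X → X → Prop} (h : IsUVO orth) :
    ∀ x y, orth x y → orth y x :=
  h.2.1

theorem IsUVO.tPerp_mem_COB {X : Type*} [TopologicalSpace X] {orth : X → X → Prop}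
    (h : IsUVO orth) {U : Set X} (hU : U ∈ COB orth) : tPerp orth U ∈ COB orth :=
  h.2.2.2.2.1 U hU

theorem subset_tPerp_tPerp {X : Type*} {orth : X → X → Prop}
    (hsymm : ∀ x y, orth x y → orth y x) (U : Set X) : U ⊆ tPerp orth (tPerp orth U) :=
  fun x hx _ hy => hsymm _ _ (hy x hx)

theorem tPerp_tPerp_preimage_subset {X X' : Type*} [TopologicalSpace X']
    {orth : X → X → Prop} {orth' : X' → X' → Prop}
    (hsymm : ∀ x y, orth x y → orth y x) (hsymm' : ∀ x y, orth' x y → orth' y x)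
    {f : X → X'} {U : Set X'} (hU : IsOpen (tPerp orth' U))
    (h2 : ∀ x y : X, ¬ orth x y → ¬ orth' (f x) (f y))
    (h3 : ∀ (y : X) (z : X'), ¬ orth' z (f y) →
      ∃ x : X, ¬ orth x y ∧ ∀ U : Set X', IsOpen U → z ∈ U → f x ∈ U) :
    tPerp orth (tPerp orth (f ⁻¹' U)) ⊆ f ⁻¹' tPerp orth' (tPerp orth' U) := by
  intro x hx z hz
  by_contra hxz
  obtain ⟨w, hwx, hzw⟩ := h3 x z fun hzx => hxz (hsymm' _ _ hzx)
  have hfw : f w ∈ tPerp orth' U := hzw _ hU hz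
  have hw : w ∉ tPerp orth (f ⁻¹' U) := fun hw => hwx (hsymm _ _ (hx w hw))
  obtain ⟨u, hu, hwu⟩ : ∃ u ∈ f ⁻¹' U, ¬ orth w u := by
    simpa only [tPerp, Set.mem_ofPred_eq, not_forall, exists_prop] using hw
  exact h2 w u hwu (hfw (f u) hu)

theorem stmt13_general {X X' : Type*} [TopologicalSpace X] [TopologicalSpace X']
    (orth : X → X → Prop) (orth' : X' → X' → Prop)
    (hX : IsUVO orth) (hX' : IsUVO orth') (f : X → X')
    (hspec : ∀ U : Set X', IsCompact U → IsOpen U → IsCompact (f ⁻¹' U) ∧ IsOpen (f ⁻¹' U))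
    (h2 : ∀ x y : X, ¬ orth x y → ¬ orth' (f x) (f y))
    (h3 : ∀ (y : X) (z : X'), ¬ orth' z (f y) →
      ∃ x : X, ¬ orth x y ∧ ∀ U : Set X', IsOpen U → z ∈ U → f x ∈ U) :
    ∀ U ∈ COB orth', f ⁻¹' U ∈ COB orth := by
  intro U hU
  obtain ⟨hfUc, hfUo⟩ := hspec U hU.1 hU.2.1
  have hperp_open : IsOpen (tPerp orth' U) := (hX'.tPerp_mem_COB hU).2.1
  have hbiperp := tPerp_tPerp_preimage_subset hX.symm hX'.symm hperp_open h2 h3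
  rw [← hU.2.2] at hbiperp
  exact ⟨hfUc, hfUo, (subset_tPerp_tPerp hX.symm _).antisymm hbiperp⟩

theorem stmt13 {X X' : Type*} [TopologicalSpace X] [TopologicalSpace X']
    [T0Space X] [T0Space X']
    (orth : X → X → Prop) (orth' : X' → X' → Prop)
    (hX : IsUVO orth) (hX' : IsUVO orth') (f : X → X')
    (hcont : Continuous f)
    (hspec : ∀ U : Set X', IsCompact U → IsOpen U → IsCompact (f ⁻¹' U) ∧ IsOpen (f ⁻¹' U))
    (h2 : ∀ x y : X, ¬ orth x y → ¬ orth' (f x) (f y))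
    (h3 : ∀ (y : X) (z : X'), ¬ orth' z (f y) →
      ∃ x : X, ¬ orth x y ∧ ∀ U : Set X', IsOpen U → z ∈ U → f x ∈ U) :
    ∀ U ∈ COB orth', f ⁻¹' U ∈ COB orth :=
  stmt13_general orth orth' hX hX' f hspec h2 h3
end

section
/- Let A be a Boolean algebra, E a quantifier on A, and d ∈ A an element such that E(d ⊓ a) ⊓ E(d ⊓ aᶜ) = ⊥ for every a ∈ A. Define the relation S on F(A) by x S y iff {E c : c ∈ x} = {E c : c ∈ y}, with S[W] = {y ∈ F(A) : x S y for some x ∈ W}. Then for every a ∈ A, S[φ(d) ∩ φ(a)] ∩ S[φ(d) ∩ φ(aᶜ)] = ∅. -/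
/-!
A filter `y` that is `S`-related to `x` contains `E c` for every `c ∈ x`, because `E c = E c'`
for some `c' ∈ y` and `c' ≤ E c'`. So a filter in both `S`-images would contain
`E (d ⊓ a) ⊓ E (d ⊓ aᶜ) = ⊥`.
-/

/-- A quantifier on a Boolean algebra. -/
def IsQuantifierB {A : Type*} [BooleanAlgebra A] (E : A → A) : Prop :=
  (∀ a b : A, E (a ⊔ b) = E a ⊔ E b) ∧ E ⊥ = ⊥ ∧ (∀ a : A, E (E a) = E a) ∧
  (∀ a : A, a ≤ E a) ∧ (∀ a : A, E (E a)ᶜ = (E a)ᶜ)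

section ProperFilter

variable {A : Type*} [Lattice A] [BoundedOrder A] {x : Set A}

theorem IsPF.mem_of_le_s16 (hx : IsPF x) {a b : A} (ha : a ∈ x) (hab : a ≤ b) : b ∈ x :=
  hx.2.1 a ha b hab

theorem IsPF.inf_mem (hx : IsPF x) {a b : A} (ha : a ∈ x) (hb : b ∈ x) : a ⊓ b ∈ x :=
  hx.2.2.1 a ha b hb

theorem IsPF.bot_notMem (hx : IsPF x) : (⊥ : A) ∉ x :=
  hx.2.2.2

theorem IsPF.apply_mem_of_image_eq {y : Set A} (hy : IsPF y) {E : A → A} (hE : ∀ a, a ≤ E a)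
    (hxy : E '' x = E '' y) {b : A} (hb : b ∈ x) : E b ∈ y := by
  obtain ⟨c, hc, hcb⟩ : E b ∈ E '' y := hxy ▸ Set.mem_image_of_mem E hb
  exact hy.mem_of_le_s16 hc (hcb ▸ hE c)

end ProperFilter

theorem IsQuantifierB.le_apply {A : Type*} [BooleanAlgebra A] {E : A → A} (hE : IsQuantifierB E)
    (a : A) : a ≤ E a :=
  hE.2.2.2.1 a

theorem stmt16 {A : Type*} [BooleanAlgebra A] (E : A → A) (hE : IsQuantifierB E)
    (d : A) (hd : ∀ a : A, E (d ⊓ a) ⊓ E (d ⊓ aᶜ) = ⊥) (a : A) :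
    {y : PF A | ∃ x ∈ phi d ∩ phi a, E '' x.1 = E '' y.1} ∩
      {y : PF A | ∃ x ∈ phi d ∩ phi aᶜ, E '' x.1 = E '' y.1} = ∅ := by
  refine Set.eq_empty_of_forall_notMem ?_
  rintro y ⟨⟨x₁, ⟨hd₁, ha₁⟩, h₁⟩, ⟨x₂, ⟨hd₂, ha₂⟩, h₂⟩⟩
  have hpos : E (d ⊓ a) ∈ y.1 :=
    y.2.apply_mem_of_image_eq hE.le_apply h₁ (x₁.2.inf_mem hd₁ ha₁)
  have hneg : E (d ⊓ aᶜ) ∈ y.1 :=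
    y.2.apply_mem_of_image_eq hE.le_apply h₂ (x₂.2.inf_mem hd₂ ha₂)
  exact y.2.bot_notMem (hd a ▸ y.2.inf_mem hpos hneg)
end

section
/- Let A be a Boolean algebra. Order F(A) by set inclusion, define x ⊥ y iff there exists a ∈ x with aᶜ ∈ y, and for U ⊆ F(A) set U^⊥ = {x ∈ F(A) : x ⊥ y for all y ∈ U} and U* = {x ∈ F(A) : z ∉ U for every proper filter z with x ⊆ z}. Then: (i) for every upward-closed U ⊆ F(A) (i.e., x ∈ U and x ⊆ z imply z ∈ U), U^⊥ = U*; and (ii) a subset U ⊆ F(A) satisfies U = U^⊥⊥ if and only if U is upward closed and U = U**. In particular, the biorthogonally closed subsets of F(A) coincide with the regular open subsets of F(A) in the upset topology of the inclusion order. -/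
/-- Orthogonal of a set of proper filters of a Boolean algebra. -/
def bPerp {A : Type*} [BooleanAlgebra A] (U : Set (PF A)) : Set (PF A) :=
  {x | ∀ y ∈ U, ∃ a ∈ x.1, aᶜ ∈ y.1}

/-- The `*` operation in the upset topology of the inclusion order on proper filters. -/
def bStar {A : Type*} [BooleanAlgebra A] (U : Set (PF A)) : Set (PF A) :=
  {x | ∀ z : PF A, x.1 ⊆ z.1 → z ∉ U}

namespace PF

variable {A : Type*} [BooleanAlgebra A]

lemma compl_notMem (x : PF A) {a : A} (ha : a ∈ x.1) : aᶜ ∉ x.1 := fun hac => by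
  have h := x.2.2.2.1 a ha aᶜ hac
  rw [inf_compl_eq_bot] at h
  exact x.2.2.2.2 h

lemma isPF_join_of_forall_compl_notMem (x y : PF A) (h : ∀ a ∈ x.1, aᶜ ∉ y.1) :
    IsPF {c : A | ∃ a ∈ x.1, ∃ b ∈ y.1, a ⊓ b ≤ c} := by
  obtain ⟨⟨a₀, ha₀⟩, -, hx_inf, -⟩ := x.2
  obtain ⟨⟨b₀, hb₀⟩, hy_up, hy_inf, -⟩ := y.2
  refine ⟨⟨a₀ ⊓ b₀, a₀, ha₀, b₀, hb₀, le_rfl⟩, ?_, ?_, ?_⟩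
  · rintro c ⟨a, ha, b, hb, hc⟩ d hcd
    exact ⟨a, ha, b, hb, hc.trans hcd⟩
  · rintro c ⟨a, ha, b, hb, hc⟩ c' ⟨a', ha', b', hb', hc'⟩
    refine ⟨a ⊓ a', hx_inf a ha a' ha', b ⊓ b', hy_inf b hb b' hb', ?_⟩
    calc (a ⊓ a') ⊓ (b ⊓ b') = (a ⊓ b) ⊓ (a' ⊓ b') := by ac_rfl
      _ ≤ c ⊓ c' := inf_le_inf hc hc'
  · rintro ⟨a, ha, b, hb, hab⟩
    have hb_le : b ≤ aᶜ := le_compl_iff_disjoint_left.mpr (disjoint_iff_inf_le.mpr hab)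
    exact h a ha (hy_up b hb aᶜ hb_le)

lemma exists_le_le_of_forall_compl_notMem (x y : PF A) (h : ∀ a ∈ x.1, aᶜ ∉ y.1) :
    ∃ z : PF A, x ≤ z ∧ y ≤ z := by
  obtain ⟨b₀, hb₀⟩ := y.2.1
  obtain ⟨a₀, ha₀⟩ := x.2.1
  exact ⟨⟨_, isPF_join_of_forall_compl_notMem x y h⟩, fun a ha => ⟨a, ha, b₀, hb₀, inf_le_left⟩,
    fun b hb => ⟨a₀, ha₀, b, hb, inf_le_right⟩⟩

end PF

section Orthogonality

variable {A : Type*} [BooleanAlgebra A]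

lemma isUpperSet_iff_forall_subset {U : Set (PF A)} :
    IsUpperSet U ↔ ∀ x ∈ U, ∀ z : PF A, x.1 ⊆ z.1 → z ∈ U :=
  ⟨fun hU _ hx _ hxz => hU hxz hx, fun hU _ _ hxz hx => hU _ hx _ hxz⟩

lemma isUpperSet_bPerp (U : Set (PF A)) : IsUpperSet (bPerp U) := by
  intro x z hxz hx y hy
  obtain ⟨a, ha, hac⟩ := hx y hy
  exact ⟨a, hxz ha, hac⟩

lemma isUpperSet_bStar (U : Set (PF A)) : IsUpperSet (bStar U) :=
  fun _ _ hxz hx w hzw => hx w (hxz.trans hzw)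

lemma bPerp_subset_bStar (U : Set (PF A)) : bPerp U ⊆ bStar U := by
  intro x hx z hxz hz
  obtain ⟨a, ha, hac⟩ := hx z hz
  exact z.compl_notMem (hxz ha) hac

lemma bStar_subset_bPerp {U : Set (PF A)} (hU : IsUpperSet U) : bStar U ⊆ bPerp U := by
  intro x hx y hy
  by_contra! hxy
  obtain ⟨z, hxz, hyz⟩ := PF.exists_le_le_of_forall_compl_notMem x y hxy
  exact hx z hxz (hU hyz hy)

lemma bPerp_eq_bStar {U : Set (PF A)} (hU : IsUpperSet U) : bPerp U = bStar U :=
  (bPerp_subset_bStar U).antisymm (bStar_subset_bPerp hU)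

lemma bPerp_bPerp_eq_bStar_bStar {U : Set (PF A)} (hU : IsUpperSet U) :
    bPerp (bPerp U) = bStar (bStar U) := by
  rw [bPerp_eq_bStar (isUpperSet_bPerp U), bPerp_eq_bStar hU]

end Orthogonality

theorem stmt19 {A : Type*} [BooleanAlgebra A] :
    (∀ U : Set (PF A), (∀ x ∈ U, ∀ z : PF A, x.1 ⊆ z.1 → z ∈ U) → bPerp U = bStar U) ∧
    (∀ U : Set (PF A), U = bPerp (bPerp U) ↔
      ((∀ x ∈ U, ∀ z : PF A, x.1 ⊆ z.1 → z ∈ U) ∧ U = bStar (bStar U))) := by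
  simp only [← isUpperSet_iff_forall_subset]
  refine ⟨fun U hU => bPerp_eq_bStar hU, fun U => ⟨fun hU => ?_, fun ⟨hU, hU_star⟩ => ?_⟩⟩
  · have hU_upper : IsUpperSet U := hU ▸ isUpperSet_bPerp (bPerp U)
    exact ⟨hU_upper, hU.trans (bPerp_bPerp_eq_bStar_bStar hU_upper)⟩
  · exact hU_star.trans (bPerp_bPerp_eq_bStar_bStar hU).symm
end
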